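/- arXiv:2001.05095 — 3 statements merged into one kernel-verified Lean document; each statement's English description precedes it below -/
import Mathlib

section
/- Let σ > 1, χ ∈ (0,1), λ ∈ (0,1). Define Ω♭(χ) = σ + (σ−1)χ and Θ = σ(2σ−1) + Ω♭(χ)·(3 + σ((σ+1)χ² + (4σ−5)χ + σ − 5)). If χ and λ satisfy Ω(χ,λ) = 0 (i.e., (1−χ) = ((σ−1)+σχ)λ with λ ∈ (0,1)), then Θ > 0. -/
/-!
Under `λ < 1` the bifurcation condition `1 - χ = ((σ - 1) + σχ) λ` gives `2 - σ < (σ + 1) χ`.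
As a cubic in `χ`, `Θ` has value `σ (σ - 1) (σ - 2)` at `χ = 0` and, once `σ ≥ 2`, only positive
higher coefficients. For `1 < σ < 2` one expands instead in `u = (σ + 1) χ - (2 - σ) > 0`, where
all four coefficients of `(σ + 1)³ Θ` are positive.
-/

theorem two_sub_lt_of_eq_mul_lt_one {σ χ lam : ℝ} (hσ : 1 < σ) (hχ : 0 < χ) (hlam : lam < 1)
    (hbif : 1 - χ = ((σ - 1) + σ * χ) * lam) : 2 - σ < (σ + 1) * χ := by
  have hden : 0 < (σ - 1) + σ * χ := by nlinarith
  nlinarith [mul_lt_mul_of_pos_left hlam hden]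

def bifurcationTheta (σ χ : ℝ) : ℝ :=
  σ * (2 * σ - 1) + (σ + (σ - 1) * χ) * (3 + σ * ((σ + 1) * χ ^ 2 + (4 * σ - 5) * χ + σ - 5))

namespace bifurcationTheta

variable {σ χ : ℝ}

theorem eq_cubic (σ χ : ℝ) :
    bifurcationTheta σ χ = σ * (σ - 1) * (σ - 2) + (5 * σ ^ 3 - 11 * σ ^ 2 + 8 * σ - 3) * χ
      + σ * (5 * σ ^ 2 - 8 * σ + 5) * χ ^ 2 + σ * (σ - 1) * (σ + 1) * χ ^ 3 := by
  unfold bifurcationTheta; ring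

theorem mul_eq_cubic_shift (σ χ u : ℝ) (hu : u = (σ + 1) * χ - (2 - σ)) :
    (σ + 1) ^ 3 * bifurcationTheta σ χ =
      3 * (σ + 1) * (2 - σ) * (2 * σ - 1) * (σ - 1) ^ 2
      + (σ + 1) * (2 * σ - 1) * (-σ ^ 3 + 7 * σ ^ 2 - 7 * σ + 3) * u
      + σ * (σ + 1) ^ 2 * (2 * σ - 1) * u ^ 2 + σ * (σ - 1) * (σ + 1) * u ^ 3 := by
  unfold bifurcationTheta; subst hu; ring

theorem pos_of_two_le (hσ : 2 ≤ σ) (hχ : 0 < χ) : 0 < bifurcationTheta σ χ := by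
  have h0 : 0 ≤ σ * (σ - 1) * (σ - 2) :=
    mul_nonneg (by nlinarith) (by linarith)
  have h1 : 0 < 5 * σ ^ 3 - 11 * σ ^ 2 + 8 * σ - 3 := by nlinarith
  have h2 : 0 < σ * (5 * σ ^ 2 - 8 * σ + 5) := by nlinarith
  have h3 : 0 < σ * (σ - 1) * (σ + 1) :=
    mul_pos (mul_pos (by linarith) (by linarith)) (by linarith)
  rw [eq_cubic]
  have := mul_pos h1 hχ
  positivity

theorem pos_of_lt_two (hσ₁ : 1 < σ) (hσ₂ : σ < 2) (hχ : 2 - σ < (σ + 1) * χ) :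
    0 < bifurcationTheta σ χ := by
  have hu : 0 < (σ + 1) * χ - (2 - σ) := by linarith
  have hg : 0 < -σ ^ 3 + 7 * σ ^ 2 - 7 * σ + 3 := by nlinarith
  have hσ₁' : 0 < σ - 1 := by linarith
  have hσ₂' : 0 < 2 - σ := by linarith
  have h2σ : 0 < 2 * σ - 1 := by linarith
  have hσ : 0 < σ := by linarith
  refine pos_of_mul_pos_right ?_ (pow_nonneg (by linarith : (0:ℝ) ≤ σ + 1) 3)
  rw [mul_eq_cubic_shift σ χ _ rfl]
  positivity

theorem pos (hσ : 1 < σ) (hχ₀ : 0 < χ) (hχ : 2 - σ < (σ + 1) * χ) : 0 < bifurcationTheta σ χ := by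
  rcases lt_or_ge σ 2 with hσ₂ | hσ₂
  · exact pos_of_lt_two hσ hσ₂ hχ
  · exact pos_of_two_le hσ₂ hχ₀

end bifurcationTheta

theorem stmt_15 (σ χ lam : ℝ) (hσ : 1 < σ) (hχ : χ ∈ Set.Ioo (0:ℝ) 1)
    (hlam : lam ∈ Set.Ioo (0:ℝ) 1)
    (hbif : 1 - χ = ((σ - 1) + σ * χ) * lam) :
    0 < σ * (2 * σ - 1) +
      (σ + (σ - 1) * χ) * (3 + σ * ((σ + 1) * χ ^ 2 + (4 * σ - 5) * χ + σ - 5)) :=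
  bifurcationTheta.pos hσ hχ.1 (two_sub_lt_of_eq_mul_lt_one hσ hχ.1 hlam.2 hbif)
end

section
/- Let σ > 1 and define ω(φ, ψ) = Ω(χ(φ), λ(ψ)) with χ(φ) = (1−φ)/(1+φ), λ(ψ) = (1−ψ)/(1+ψ), Ω(s,t) = (−(1−s)+((σ−1)+σs)t)/(σ+(σ−1)s). Then ∂ω/∂φ < 0 and ∂ω/∂ψ < 0 at every (φ,ψ) ∈ (0,1)²; explicitly ∂ω/∂φ = −((1+λ)(2σ−1)/(σ+(σ−1)χ)²)·(2/(1+φ)²) and ∂ω/∂ψ = −(((σ−1)+σχ)/(σ+(σ−1)χ))·(2/(1+ψ)²). -/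
noncomputable def Omega (σ s t : ℝ) : ℝ :=
  (-(1 - s) + ((σ - 1) + σ * s) * t) / (σ + (σ - 1) * s)

lemma hasDerivAt_one_sub_div_one_add {u : ℝ} (hu : 1 + u ≠ 0) :
    HasDerivAt (fun x : ℝ => (1 - x) / (1 + x)) (-2 / (1 + u) ^ 2) u := by
  have := ((hasDerivAt_id' u).const_sub 1).div ((hasDerivAt_id' u).const_add 1) hu
  exact this.congr_deriv (by ring)

lemma one_sub_div_one_add_pos {u : ℝ} (hu : u ∈ Set.Ioo (-1 : ℝ) 1) : 0 < (1 - u) / (1 + u) :=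
  div_pos (by linarith [hu.2]) (by linarith [hu.1])

section Omega

variable {σ : ℝ}

-- The quotient-rule numerator collapses to `(1 + t) * (σ ^ 2 - (σ - 1) ^ 2)`.
lemma hasDerivAt_Omega_left (t : ℝ) {s : ℝ} (hs : σ + (σ - 1) * s ≠ 0) :
    HasDerivAt (fun s => Omega σ s t) ((1 + t) * (2 * σ - 1) / (σ + (σ - 1) * s) ^ 2) s := by
  have hnum : HasDerivAt (fun s => -(1 - s) + ((σ - 1) + σ * s) * t) (1 + σ * t) s := by
    have := ((hasDerivAt_id' s).const_sub 1).neg.add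
      ((((hasDerivAt_id' s).const_mul σ).const_add (σ - 1)).mul_const t)
    exact this.congr_deriv (by ring)
  have hden : HasDerivAt (fun s => σ + (σ - 1) * s) (σ - 1) s := by
    simpa using ((hasDerivAt_id' s).const_mul (σ - 1)).const_add σ
  exact (hnum.div hden hs).congr_deriv (by field_simp; ring)

lemma hasDerivAt_Omega_right (s t : ℝ) :
    HasDerivAt (fun t => Omega σ s t) (((σ - 1) + σ * s) / (σ + (σ - 1) * s)) t := by
  have := (((hasDerivAt_id' t).const_mul ((σ - 1) + σ * s)).const_add (-(1 - s))).div_const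
    (σ + (σ - 1) * s)
  simpa [Omega] using this

lemma Omega_denom_pos (hσ : 1 < σ) {s : ℝ} (hs : 0 < s) : 0 < σ + (σ - 1) * s := by
  nlinarith

lemma Omega_numer_coeff_pos (hσ : 1 < σ) {s : ℝ} (hs : 0 < s) : 0 < (σ - 1) + σ * s := by
  nlinarith

end Omega

theorem stmt_16 (σ : ℝ) (hσ : 1 < σ) (φ ψ : ℝ) (hφ : φ ∈ Set.Ioo (0:ℝ) 1)
    (hψ : ψ ∈ Set.Ioo (0:ℝ) 1) :
    let χ := (1 - φ) / (1 + φ)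
    let lam := (1 - ψ) / (1 + ψ)
    let dφ := -((1 + lam) * (2 * σ - 1) / (σ + (σ - 1) * χ) ^ 2) * (2 / (1 + φ) ^ 2)
    let dψ := -(((σ - 1) + σ * χ) / (σ + (σ - 1) * χ)) * (2 / (1 + ψ) ^ 2)
    HasDerivAt (fun u : ℝ => Omega σ ((1 - u) / (1 + u)) lam) dφ φ ∧ dφ < 0 ∧
    HasDerivAt (fun u : ℝ => Omega σ χ ((1 - u) / (1 + u))) dψ ψ ∧ dψ < 0 := by
  intro χ lam dφ dψ
  have hφ' : 1 + φ ≠ 0 := by linarith [hφ.1]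
  have hψ' : 1 + ψ ≠ 0 := by linarith [hψ.1]
  have hχ : 0 < χ := one_sub_div_one_add_pos ⟨by linarith [hφ.1], hφ.2⟩
  have hlam : 0 < lam := one_sub_div_one_add_pos ⟨by linarith [hψ.1], hψ.2⟩
  have hD := Omega_denom_pos hσ hχ
  refine ⟨?_, ?_, ?_, ?_⟩
  · exact ((hasDerivAt_Omega_left lam hD.ne').comp φ
      (hasDerivAt_one_sub_div_one_add hφ')).congr_deriv
      (show _ = dφ by simp only [dφ]; ring)
  · have : 0 < (1 + lam) * (2 * σ - 1) / (σ + (σ - 1) * χ) ^ 2 :=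
      div_pos (mul_pos (by linarith) (by linarith)) (by positivity)
    exact mul_neg_of_neg_of_pos (neg_neg_of_pos this) (by positivity)
  · exact ((hasDerivAt_Omega_right χ _).comp ψ
      (hasDerivAt_one_sub_div_one_add hψ')).congr_deriv
      (show _ = dψ by simp only [dψ]; ring)
  · exact mul_neg_of_neg_of_pos
      (neg_neg_of_pos (div_pos (Omega_numer_coeff_pos hσ hχ) hD)) (by positivity)
end

section
/- Let M be an n×n matrix with strictly positive entries m_{ij} > 0 and column sums equal to 1 restricted as follows: m_{ij} = a_i^{σ−1} w_i^{1−σ} φ_{ij} / ∑ₗ a_l^{σ−1} w_l^{1−σ} φ_{lj} with a_i, w_i, φ_{ij} > 0 and σ > 1. Then the excess demand Ψᵢ(w) = (1/wᵢ)(∑ₖ m_{ik} wₖ xₖ − wᵢ xᵢ) has the gross substitute property: ∂Ψᵢ/∂wⱼ > 0 for all i ≠ j, provided x ≥ 0 with xₖ > 0 for some k. -/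
/-!
Only the `j`-th term of each denominator `∑ₗ aₗ^(σ-1) wₗ^(1-σ) φₗₖ` depends on `wⱼ`, and since
`1 - σ < 0` every denominator is strictly decreasing in `wⱼ`. Each summand of `Ψᵢ` is a
nonnegative, nondecreasing numerator `cₖ wₖ xₖ` over such a denominator, so it is nondecreasing
in `wⱼ`, strictly when `xₖ > 0`.
-/

open Finset Function

theorem hasDerivAt_sum_apply_update {ι : Type*} [Fintype ι] [DecidableEq ι]
    (f : ι → ℝ → ℝ) (w : ι → ℝ) (j : ι) {f' : ℝ} (hf : HasDerivAt (f j) f' (w j)) :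
    HasDerivAt (fun t => ∑ l, f l (update w j t l)) f' (w j) := by
  have hsplit : (fun t => ∑ l, f l (update w j t l)) =
      fun t => f j t + ∑ l ∈ univ \ {j}, f l (w l) := by
    funext t
    simp only [apply_update f w j t, sum_update_of_mem (mem_univ j)]
  rw [hsplit]
  exact hf.add_const _

theorem exists_hasDerivAt_div_nonneg {p q : ℝ → ℝ} {p' q' t : ℝ} (hp : HasDerivAt p p' t)
    (hq : HasDerivAt q q' t) (hp' : 0 ≤ p') (hpt : 0 ≤ p t) (hqt : 0 < q t) (hq' : q' < 0) :
    ∃ d, HasDerivAt (fun s => p s / q s) d t ∧ 0 ≤ d ∧ (0 < p t → 0 < d) := by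
  refine ⟨_, hp.fun_div hq hqt.ne', ?_, fun hpt' => ?_⟩
  · have : 0 ≤ p t * -q' := mul_nonneg hpt (neg_nonneg.2 hq'.le)
    have : 0 ≤ p' * q t := mul_nonneg hp' hqt.le
    exact div_nonneg (by linarith) (sq_nonneg _)
  · have : 0 < p t * -q' := mul_pos hpt' (neg_pos.2 hq')
    have : 0 ≤ p' * q t := mul_nonneg hp' hqt.le
    exact div_pos (by linarith) (pow_pos hqt 2)

section Armington

variable {n : ℕ} {σ : ℝ} {a : Fin n → ℝ} {φm : Fin n → Fin n → ℝ} {w : Fin n → ℝ}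

theorem armington_denom_pos (ha : ∀ i, 0 < a i) (hφ : ∀ i j, 0 < φm i j) (hw : ∀ i, 0 < w i)
    (j k : Fin n) : 0 < ∑ l, a l ^ (σ - 1) * w l ^ (1 - σ) * φm l k :=
  sum_pos (fun l _ => by have := ha l; have := hw l; have := hφ l k; positivity)
    ⟨j, mem_univ j⟩

theorem hasDerivAt_armington_denom (hw : ∀ i, 0 < w i) (j k : Fin n) :
    HasDerivAt (fun t => ∑ l, a l ^ (σ - 1) * update w j t l ^ (1 - σ) * φm l k)
      (a j ^ (σ - 1) * ((1 - σ) * w j ^ (1 - σ - 1)) * φm j k) (w j) :=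
  hasDerivAt_sum_apply_update (fun l s => a l ^ (σ - 1) * s ^ (1 - σ) * φm l k) w j
    (((Real.hasDerivAt_rpow_const (Or.inl (hw j).ne')).const_mul _).mul_const _)

theorem exists_hasDerivAt_armington_summand (hσ : 1 < σ) (ha : ∀ i, 0 < a i)
    (hφ : ∀ i j, 0 < φm i j) (hw : ∀ i, 0 < w i) {x : ℝ} (hx : 0 ≤ x) {C : ℝ} (hC : 0 < C)
    (j k : Fin n) :
    ∃ d, HasDerivAt (fun t => C / (∑ l, a l ^ (σ - 1) * update w j t l ^ (1 - σ) * φm l k) *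
        (update w j t k * x)) d (w j) ∧ 0 ≤ d ∧ (0 < x → 0 < d) := by
  have hN : HasDerivAt (fun t => C * (update w j t k * x))
      (C * (Pi.single (M := fun _ => ℝ) j 1 k * x)) (w j) :=
    ((hasDerivAt_pi.1 (hasDerivAt_update w j (w j)) k).mul_const x).const_mul C
  have hN' : 0 ≤ C * (Pi.single (M := fun _ => ℝ) j 1 k * x) := by
    have : 0 ≤ Pi.single (M := fun _ => ℝ) j 1 k := by rw [Pi.single_apply]; positivity
    positivity
  have hD' : a j ^ (σ - 1) * ((1 - σ) * w j ^ (1 - σ - 1)) * φm j k < 0 :=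
    mul_neg_of_neg_of_pos (mul_neg_of_pos_of_neg (Real.rpow_pos_of_pos (ha j) _)
      (mul_neg_of_neg_of_pos (by linarith) (Real.rpow_pos_of_pos (hw j) _))) (hφ j k)
  have hDpos := armington_denom_pos (σ := σ) ha hφ hw j k
  rw [← update_eq_self j w] at hDpos
  have hNpos : 0 ≤ C * (update w j (w j) k * x) := by
    have := hw k
    rw [update_eq_self]
    positivity
  obtain ⟨d, hd, hd_nonneg, hd_pos⟩ := exists_hasDerivAt_div_nonneg hN
    (hasDerivAt_armington_denom hw j k) hN' hNpos hDpos hD'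
  refine ⟨d, hd.congr_of_eventuallyEq (.of_forall fun t => by ring), hd_nonneg, fun hx' => ?_⟩
  have := hw k
  exact hd_pos (by rw [update_eq_self]; positivity)

end Armington

theorem stmt_18 (n : ℕ) (σ : ℝ) (hσ : 1 < σ)
    (a : Fin n → ℝ) (φm : Fin n → Fin n → ℝ) (x : Fin n → ℝ)
    (ha : ∀ i, 0 < a i) (hφ : ∀ i j, 0 < φm i j)
    (hx : ∀ i, 0 ≤ x i) (hx' : ∃ k, 0 < x k)
    (w : Fin n → ℝ) (hw : ∀ i, 0 < w i) (i j : Fin n) (hij : i ≠ j) :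
    0 < deriv (fun t : ℝ =>
      (1 / Function.update w j t i) *
        ((∑ k, (a i ^ (σ - 1) * Function.update w j t i ^ (1 - σ) * φm i k /
            ∑ l, a l ^ (σ - 1) * Function.update w j t l ^ (1 - σ) * φm l k) *
          (Function.update w j t k * x k)) -
          Function.update w j t i * x i)) (w j) := by
  simp only [update_of_ne hij]
  choose d hd hd_nonneg hd_pos using fun k =>
    exists_hasDerivAt_armington_summand hσ ha hφ hw (hx k)
      (C := a i ^ (σ - 1) * w i ^ (1 - σ) * φm i k)
      (by have := ha i; have := hw i; have := hφ i k; positivity) j k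
  have hΨ := ((HasDerivAt.fun_sum (u := univ) fun k _ => hd k).sub_const (w i * x i)).const_mul
    (1 / w i)
  rw [hΨ.deriv]
  obtain ⟨k, hk⟩ := hx'
  have := hw i
  exact mul_pos (by positivity)
    (sum_pos' (fun k _ => hd_nonneg k) ⟨k, mem_univ k, hd_pos k hk⟩)
end
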